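/- arXiv:2207.10879 — 7 statements merged into one kernel-verified Lean document; each statement's English description precedes it below -/
import Mathlib

section
/- (Proposition 1, first part.) Let Q be a symmetric, conditionally negative definite n×n real matrix, let 1 ≤ p ≤ n, let K = {x ∈ {0,1}^n : Σ_{i=1}^n x_i = p}, let f(x) = ½⟨Qx, x⟩ and h(x, y) = ⟨Qy, x − y⟩ + f(y). Let Γ_K = {(x, θ) ∈ ℝ^n × ℝ : x ∈ K and θ ≤ h(x, y) for all y ∈ K}. Then the maximum of θ over (x, θ) ∈ Γ_K equals the maximum of f over K; that is, max_{x∈K} f(x) is the greatest element of the set {θ : (x, θ) ∈ Γ_K for some x}. -/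
open Matrix BigOperators

/-- Proposition 1, first part: For a symmetric conditionally negative
definite matrix `Q`, `K = {x ∈ {0,1}ⁿ : ∑ x i = p}` with `1 ≤ p ≤ n`,
`f x = ½⟨Qx, x⟩`, `h x y = ⟨Qy, x - y⟩ + f y`, and
`Γ_K = {(x, θ) : x ∈ K, θ ≤ h x y ∀ y ∈ K}`, the maximum of `θ` over `Γ_K` equals the
maximum of `f` over `K`: `max_{x∈K} f x` is the greatest element of
`{θ : (x, θ) ∈ Γ_K for some x}`. -/
theorem cutting_plane_model_max_eq_max
    (n p : ℕ) (hp : 1 ≤ p) (hpn : p ≤ n)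
    (Q : Matrix (Fin n) (Fin n) ℝ) (hQ : Q.IsSymm)
    (hcnd : ∀ z : Fin n → ℝ, ∑ i, z i = 0 → Q *ᵥ z ⬝ᵥ z ≤ 0)
    (K : Set (Fin n → ℝ))
    (hK : K = {x | (∀ i, x i = 0 ∨ x i = 1) ∧ ∑ i, x i = (p : ℝ)})
    (f : (Fin n → ℝ) → ℝ) (hf : ∀ x, f x = (1 / 2) * (Q *ᵥ x ⬝ᵥ x))
    (h : (Fin n → ℝ) → (Fin n → ℝ) → ℝ)
    (hh : ∀ x y, h x y = Q *ᵥ y ⬝ᵥ (x - y) + f y)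
    (M : ℝ) (hM : IsGreatest (f '' K) M) :
    IsGreatest {θ : ℝ | ∃ x ∈ K, ∀ y ∈ K, θ ≤ h x y} M := by
  obtain ⟨⟨x0, hx0K, hfx0⟩, hub⟩ := hM
  have symm : ∀ a b : Fin n → ℝ, Q *ᵥ a ⬝ᵥ b = Q *ᵥ b ⬝ᵥ a := by
    intro a b
    rw [dotProduct_comm, Matrix.dotProduct_mulVec, ← Matrix.mulVec_transpose, hQ.eq]
  constructor
  · refine ⟨x0, hx0K, fun y hyK => ?_⟩
    have hsx : ∑ i, x0 i = (p : ℝ) := by rw [hK] at hx0K; exact hx0K.2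
    have hsy : ∑ i, y i = (p : ℝ) := by rw [hK] at hyK; exact hyK.2
    have hz : ∑ i, (x0 - y) i = 0 := by
      simp only [Pi.sub_apply, Finset.sum_sub_distrib, hsx, hsy, sub_self]
    have hneg := hcnd (x0 - y) hz
    have hexp : Q *ᵥ (x0 - y) ⬝ᵥ (x0 - y)
        = Q *ᵥ x0 ⬝ᵥ x0 - Q *ᵥ x0 ⬝ᵥ y - Q *ᵥ y ⬝ᵥ x0 + Q *ᵥ y ⬝ᵥ y := by
      rw [Matrix.mulVec_sub, sub_dotProduct, dotProduct_sub,
        dotProduct_sub]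
      ring
    have hsym := symm x0 y
    rw [hh, hf, dotProduct_sub]
    rw [← hfx0, hf]
    rw [hexp, hsym] at hneg
    linarith
  · rintro θ ⟨x, hxK, hx⟩
    have := hx x hxK
    rw [hh, sub_self, dotProduct_zero, zero_add] at this
    exact this.trans (hub ⟨x, hxK, rfl⟩)
end

section
/- (Proposition 1, second part.) Let Q be a symmetric, conditionally negative definite n×n real matrix, let 1 ≤ p ≤ n, K = {x ∈ {0,1}^n : Σ_{i=1}^n x_i = p}, f(x) = ½⟨Qx, x⟩, h(x, y) = ⟨Qy, x − y⟩ + f(y), and Γ_K = {(x, θ) : x ∈ K, θ ≤ h(x, y) for all y ∈ K}. If (x*, θ*) ∈ Γ_K satisfies θ* ≥ θ for all (x, θ) ∈ Γ_K, then x* maximizes f over K: f(x*) ≥ f(x) for all x ∈ K. -/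
open Matrix BigOperators

/-- Proposition 1, second part: With `Q` symmetric conditionally negative
definite, `K = {x ∈ {0,1}ⁿ : ∑ x i = p}` (`1 ≤ p ≤ n`), `f x = ½⟨Qx, x⟩`,
`h x y = ⟨Qy, x - y⟩ + f y`, and `Γ_K = {(x,θ) : x ∈ K, θ ≤ h x y ∀ y ∈ K}`: if
`(x*, θ*) ∈ Γ_K` satisfies `θ* ≥ θ` for all `(x, θ) ∈ Γ_K`, then `x*` maximizes `f`
over `K`. -/
theorem cutting_plane_model_solution_is_optimal
    (n p : ℕ) (hp : 1 ≤ p) (hpn : p ≤ n)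
    (Q : Matrix (Fin n) (Fin n) ℝ) (hQ : Q.IsSymm)
    (hcnd : ∀ z : Fin n → ℝ, ∑ i, z i = 0 → Q *ᵥ z ⬝ᵥ z ≤ 0)
    (K : Set (Fin n → ℝ))
    (hK : K = {x | (∀ i, x i = 0 ∨ x i = 1) ∧ ∑ i, x i = (p : ℝ)})
    (f : (Fin n → ℝ) → ℝ) (hf : ∀ x, f x = (1 / 2) * (Q *ᵥ x ⬝ᵥ x))
    (h : (Fin n → ℝ) → (Fin n → ℝ) → ℝ)
    (hh : ∀ x y, h x y = Q *ᵥ y ⬝ᵥ (x - y) + f y)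
    (xstar : Fin n → ℝ) (θstar : ℝ)
    (hfeas : xstar ∈ K ∧ ∀ y ∈ K, θstar ≤ h xstar y)
    (hopt : ∀ x θ, x ∈ K → (∀ y ∈ K, θ ≤ h x y) → θ ≤ θstar) :
    ∀ x ∈ K, f x ≤ f xstar := by
  have hsym : ∀ a b : Fin n → ℝ, Q *ᵥ a ⬝ᵥ b = Q *ᵥ b ⬝ᵥ a := by
    intro a b
    calc Q *ᵥ a ⬝ᵥ b = b ⬝ᵥ Q *ᵥ a := by rw [dotProduct_comm]
    _ = b ᵥ* Q ⬝ᵥ a := by rw [dotProduct_mulVec]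
    _ = Qᵀ *ᵥ b ⬝ᵥ a := by rw [mulVec_transpose]
    _ = Q *ᵥ b ⬝ᵥ a := by rw [hQ.eq]
  have key : ∀ a b, a ∈ K → b ∈ K → f a ≤ h a b := by
    intro a b ha hb
    have hz : ∑ i, (a - b) i = 0 := by
      rw [hK] at ha hb
      simp only [Pi.sub_apply, Finset.sum_sub_distrib, ha.2, hb.2, sub_self]
    have hneg := hcnd (a - b) hz
    have hexp : Q *ᵥ (a - b) ⬝ᵥ (a - b)
        = Q *ᵥ a ⬝ᵥ a - Q *ᵥ a ⬝ᵥ b - Q *ᵥ b ⬝ᵥ a + Q *ᵥ b ⬝ᵥ b := by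
      rw [mulVec_sub, sub_dotProduct, dotProduct_sub, dotProduct_sub]; ring
    rw [hh, hf, hf, dotProduct_sub]
    have := hsym a b
    linarith [hneg, hexp ▸ hneg]
  intro x hx
  have h1 : f x ≤ θstar := hopt x (f x) hx (fun y hy => key x y hx hy)
  have h2 : θstar ≤ h xstar xstar := hfeas.2 xstar hfeas.1
  have h3 : h xstar xstar = f xstar := by
    rw [hh]; simp
  linarith
end

section
/- (Non-revisiting property used in Theorem 2.) Let Q be a symmetric n×n real matrix, f(x) = ½⟨Qx, x⟩, h(x, y) = ⟨Qy, x − y⟩ + f(y), and K = {x ∈ {0,1}^n : Σ_{i=1}^n x_i = p}. Suppose x^0, x^1, …, x^m ∈ K and θ^1, …, θ^m ∈ ℝ satisfy, for each k ∈ {1, …, m}: θ^k ≤ h(x^k, x^j) for all 0 ≤ j < k, and θ^k > max_{0 ≤ j < k} f(x^j). Then the points x^0, x^1, …, x^m are pairwise distinct. -/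
open Matrix BigOperators

/-- Non-revisiting property used in Theorem 2: If iterates
`x 0, …, x m ∈ K` and values `θ 1, …, θ m` satisfy, for each `1 ≤ k ≤ m`,
`θ k ≤ h (x k) (x j)` for all `j < k` and `θ k > max_{j < k} f (x j)`, then the points
`x 0, …, x m` are pairwise distinct. -/
theorem cutting_plane_iterates_pairwise_distinct
    (n p : ℕ) (hp : 1 ≤ p) (hpn : p ≤ n)
    (Q : Matrix (Fin n) (Fin n) ℝ) (hQ : Q.IsSymm)
    (K : Set (Fin n → ℝ))
    (hK : K = {x | (∀ i, x i = 0 ∨ x i = 1) ∧ ∑ i, x i = (p : ℝ)})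
    (f : (Fin n → ℝ) → ℝ) (hf : ∀ x, f x = (1 / 2) * (Q *ᵥ x ⬝ᵥ x))
    (h : (Fin n → ℝ) → (Fin n → ℝ) → ℝ)
    (hh : ∀ x y, h x y = Q *ᵥ y ⬝ᵥ (x - y) + f y)
    (m : ℕ) (x : ℕ → Fin n → ℝ) (θ : ℕ → ℝ)
    (hxK : ∀ k ≤ m, x k ∈ K)
    (hcut : ∀ k, 1 ≤ k → k ≤ m → ∀ j < k, θ k ≤ h (x k) (x j))
    (himpr : ∀ k, 1 ≤ k → k ≤ m → ∀ j < k, f (x j) < θ k) :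
    ∀ j ≤ m, ∀ k ≤ m, j ≠ k → x j ≠ x k := by
  have key : ∀ j k, j < k → k ≤ m → x j ≠ x k := by
    intro j k hjk hkm heq
    have h1 := hcut k (Nat.one_le_iff_ne_zero.mpr (by omega)) hkm j hjk
    have h2 := himpr k (Nat.one_le_iff_ne_zero.mpr (by omega)) hkm j hjk
    rw [hh, ← heq, sub_self, dotProduct_zero, zero_add] at h1
    linarith
  intro j hj k hk hne
  rcases lt_or_gt_of_ne hne with hlt | hgt
  · exact key j k hlt hk
  · exact (key k j hgt hj).symm
end

section
/- (Finite termination in Theorem 2.) Let Q be a symmetric n×n real matrix, f(x) = ½⟨Qx, x⟩, h(x, y) = ⟨Qy, x − y⟩ + f(y), and K = {x ∈ {0,1}^n : Σ_{i=1}^n x_i = p} with 1 ≤ p ≤ n. There is no infinite sequence x^0, x^1, x^2, … ∈ K together with θ^1, θ^2, … ∈ ℝ such that for every k ≥ 1: θ^k ≤ h(x^k, x^j) for all 0 ≤ j < k and θ^k > max_{0 ≤ j < k} f(x^j). In particular, any such sequence has at most binom(n, p) terms. -/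
open Matrix BigOperators

/-- Finite termination in Theorem 2: There is no infinite sequence of
iterates `x 0, x 1, … ∈ K` and values `θ 1, θ 2, …` with, for every `k ≥ 1`,
`θ k ≤ h (x k) (x j)` for all `j < k` and `θ k > max_{j < k} f (x j)`; in particular,
any such (finite) sequence has at most `binom(n, p)` terms. -/
theorem cutting_plane_finite_termination
    (n p : ℕ) (hp : 1 ≤ p) (hpn : p ≤ n)
    (Q : Matrix (Fin n) (Fin n) ℝ) (hQ : Q.IsSymm)
    (K : Set (Fin n → ℝ))
    (hK : K = {x | (∀ i, x i = 0 ∨ x i = 1) ∧ ∑ i, x i = (p : ℝ)})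
    (f : (Fin n → ℝ) → ℝ) (hf : ∀ x, f x = (1 / 2) * (Q *ᵥ x ⬝ᵥ x))
    (h : (Fin n → ℝ) → (Fin n → ℝ) → ℝ)
    (hh : ∀ x y, h x y = Q *ᵥ y ⬝ᵥ (x - y) + f y) :
    (¬ ∃ (x : ℕ → Fin n → ℝ) (θ : ℕ → ℝ),
        (∀ k, x k ∈ K) ∧
        (∀ k, 1 ≤ k → ∀ j < k, θ k ≤ h (x k) (x j)) ∧
        (∀ k, 1 ≤ k → ∀ j < k, f (x j) < θ k)) ∧
    (∀ (m : ℕ) (x : ℕ → Fin n → ℝ) (θ : ℕ → ℝ),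
        (∀ k ≤ m, x k ∈ K) →
        (∀ k, 1 ≤ k → k ≤ m → ∀ j < k, θ k ≤ h (x k) (x j)) →
        (∀ k, 1 ≤ k → k ≤ m → ∀ j < k, f (x j) < θ k) →
        m + 1 ≤ n.choose p) := by

  have key : ∀ (m : ℕ) (x : ℕ → Fin n → ℝ) (θ : ℕ → ℝ),
      (∀ k ≤ m, x k ∈ K) →
      (∀ k, 1 ≤ k → k ≤ m → ∀ j < k, θ k ≤ h (x k) (x j)) →
      (∀ k, 1 ≤ k → k ≤ m → ∀ j < k, f (x j) < θ k) →
      m + 1 ≤ n.choose p := by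
    intro m x θ hxK hθle hθgt
    have hxne : ∀ j k, j < k → k ≤ m → x j ≠ x k := by
      intro j k hjk hkm heq
      have h1 := hθle k (by omega) hkm j hjk
      have h2 := hθgt k (by omega) hkm j hjk
      rw [hh, heq, sub_self, dotProduct_zero, zero_add] at h1
      rw [heq] at h2
      linarith
    have hx01 : ∀ k ≤ m, ∀ i, x k i = 0 ∨ x k i = 1 := by
      intro k hk i
      have := hxK k hk
      rw [hK] at this
      exact this.1 i
    have hxsum : ∀ k ≤ m, ∑ i, x k i = (p : ℝ) := by
      intro k hk
      have := hxK k hk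
      rw [hK] at this
      exact this.2
    set g : Fin (m + 1) → Finset (Fin n) :=
      fun k => Finset.univ.filter (fun i => x k i = 1) with hg
    have hcard : ∀ k : Fin (m + 1), (g k).card = p := by
      intro k
      have hk : (k : ℕ) ≤ m := by omega
      have hcast : ((g k).card : ℝ) = (p : ℝ) := by
        rw [← hxsum k hk]
        rw [hg]
        rw [← Finset.sum_boole]
        refine Finset.sum_congr rfl fun i _ => ?_
        rcases hx01 k hk i with h0 | h1
        · rw [h0]; simp [h0]
        · rw [h1]; simp [h1]
      exact_mod_cast hcast
    have hginj : Function.Injective fun k : Fin (m + 1) =>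
        (⟨g k, hcard k⟩ : {s : Finset (Fin n) // s.card = p}) := by
      intro a b hab
      simp only [Subtype.mk.injEq] at hab
      by_contra hne
      have hxeq : x a = x b := by
        funext i
        have hia : i ∈ g a ↔ x a i = 1 := by simp [hg]
        have hib : i ∈ g b ↔ x b i = 1 := by simp [hg]
        rcases hx01 a (by omega) i with h0a | h1a <;>
          rcases hx01 b (by omega) i with h0b | h1b
        · rw [h0a, h0b]
        · exfalso
          have : (i : Fin n) ∈ g b := hib.mpr h1b
          rw [← hab] at this
          have := hia.mp this
          rw [h0a] at this; norm_num at this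
        · exfalso
          have : (i : Fin n) ∈ g a := hia.mpr h1a
          rw [hab] at this
          have := hib.mp this
          rw [h0b] at this; norm_num at this
        · rw [h1a, h1b]
      have hne' : (a : ℕ) ≠ (b : ℕ) := fun hc => hne (Fin.ext hc)
      rcases lt_or_gt_of_ne hne' with hlt | hgt
      · exact hxne a b hlt (by omega) hxeq
      · exact hxne b a hgt (by omega) hxeq.symm
    have := Fintype.card_le_of_injective _ hginj
    rwa [Fintype.card_fin, Fintype.card_finset_len, Fintype.card_fin] at this
  constructor
  · rintro ⟨x, θ, hxK, hθle, hθgt⟩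
    have := key (n.choose p) x θ (fun k _ => hxK k)
      (fun k hk _ j hj => hθle k hk j hj)
      (fun k hk _ j hj => hθgt k hk j hj)
    omega
  · exact key
end

section
/- (Optimality at termination in Theorem 2.) Let Q be a symmetric, conditionally negative definite n×n real matrix, f(x) = ½⟨Qx, x⟩, h(x, y) = ⟨Qy, x − y⟩ + f(y), and K = {x ∈ {0,1}^n : Σ_{i=1}^n x_i = p} with 1 ≤ p ≤ n. Let A ⊆ K be nonempty and set LB = max_{y ∈ A} f(y). If there is no pair (x, θ) with x ∈ K, θ ∈ ℝ, θ ≤ h(x, y) for all y ∈ A, and θ > LB, then LB = max_{x ∈ K} f(x); i.e., any point of A attaining LB is an optimal solution of the problem max_{x∈K} f(x). -/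
open Matrix BigOperators

/-!
For symmetric `Q`, the quadratic form `f` satisfies
`h x y - f x = -½ ⟨Q(x - y), x - y⟩`. Two points of `K` have the same coordinate sum `p`, so
their difference sums to zero and conditional negative definiteness makes every tangent plane
`h · y` with `y ∈ A` an upper bound of `f` on `K`. Hence if `f x > LB` for some `x ∈ K`, the
pair `(x, f x)` would be a candidate solution of the cutting-plane model.
-/

namespace Matrix

variable {ι R : Type*} [Fintype ι] [CommRing R]

theorem IsSymm.mulVec_dotProduct_comm {Q : Matrix ι ι R} (hQ : Q.IsSymm) (u v : ι → R) :
    Q *ᵥ u ⬝ᵥ v = Q *ᵥ v ⬝ᵥ u := by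
  rw [dotProduct_comm, dotProduct_mulVec, ← mulVec_transpose, hQ.eq]

theorem IsSymm.mulVec_sub_dotProduct_sub {Q : Matrix ι ι R} (hQ : Q.IsSymm) (x y : ι → R) :
    Q *ᵥ (x - y) ⬝ᵥ (x - y) = Q *ᵥ x ⬝ᵥ x - 2 * (Q *ᵥ y ⬝ᵥ x) + Q *ᵥ y ⬝ᵥ y := by
  rw [mulVec_sub, sub_dotProduct, dotProduct_sub, dotProduct_sub, hQ.mulVec_dotProduct_comm x y]
  ring

theorem IsSymm.half_quadForm_le_tangent
    {𝕜 : Type*} [Field 𝕜] [LinearOrder 𝕜] [IsStrictOrderedRing 𝕜] {Q : Matrix ι ι 𝕜}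
    (hQ : Q.IsSymm) {x y : ι → 𝕜} (hxy : Q *ᵥ (x - y) ⬝ᵥ (x - y) ≤ 0) :
    1 / 2 * (Q *ᵥ x ⬝ᵥ x) ≤ Q *ᵥ y ⬝ᵥ (x - y) + 1 / 2 * (Q *ᵥ y ⬝ᵥ y) := by
  rw [hQ.mulVec_sub_dotProduct_sub] at hxy
  rw [dotProduct_sub]
  linarith

end Matrix

theorem sum_sub_eq_zero_of_sum_eq {ι R : Type*} [Fintype ι] [AddCommGroup R] {x y : ι → R}
    (hxy : ∑ i, x i = ∑ i, y i) : ∑ i, (x - y) i = 0 := by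
  simp only [Pi.sub_apply, Finset.sum_sub_distrib, hxy, sub_self]

theorem isGreatest_image_of_no_candidate {α β : Type*} [LinearOrder β] {A K : Set α}
    {f : α → β} {h : α → α → β} {LB : β} (hAK : A ⊆ K) (hLB : IsGreatest (f '' A) LB)
    (hcut : ∀ x ∈ K, ∀ y ∈ A, f x ≤ h x y)
    (hterm : ¬ ∃ x θ, x ∈ K ∧ (∀ y ∈ A, θ ≤ h x y) ∧ LB < θ) :
    IsGreatest (f '' K) LB := by
  refine ⟨Set.image_mono hAK hLB.1, ?_⟩
  rintro _ ⟨x, hxK, rfl⟩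
  by_contra! hlt
  exact hterm ⟨x, f x, hxK, hcut x hxK, hlt⟩

theorem cutting_plane_termination_optimality_general
    (n p : ℕ)
    (Q : Matrix (Fin n) (Fin n) ℝ) (hQ : Q.IsSymm)
    (hcnd : ∀ z : Fin n → ℝ, ∑ i, z i = 0 → Q *ᵥ z ⬝ᵥ z ≤ 0)
    (K : Set (Fin n → ℝ))
    (hK : K = {x | (∀ i, x i = 0 ∨ x i = 1) ∧ ∑ i, x i = (p : ℝ)})
    (f : (Fin n → ℝ) → ℝ) (hf : ∀ x, f x = (1 / 2) * (Q *ᵥ x ⬝ᵥ x))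
    (h : (Fin n → ℝ) → (Fin n → ℝ) → ℝ)
    (hh : ∀ x y, h x y = Q *ᵥ y ⬝ᵥ (x - y) + f y)
    (A : Set (Fin n → ℝ)) (hAK : A ⊆ K)
    (LB : ℝ) (hLB : IsGreatest (f '' A) LB)
    (hterm : ¬ ∃ (x : Fin n → ℝ) (θ : ℝ), x ∈ K ∧ (∀ y ∈ A, θ ≤ h x y) ∧ LB < θ) :
    IsGreatest (f '' K) LB := by
  refine isGreatest_image_of_no_candidate hAK hLB (fun x hxK y hyA => ?_) hterm
  have hsum : ∑ i, (x - y) i = 0 := by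
    subst hK
    exact sum_sub_eq_zero_of_sum_eq (hxK.2.trans (hAK hyA).2.symm)
  rw [hh, hf, hf]
  exact hQ.half_quadForm_le_tangent (hcnd _ hsum)

/-- Optimality at termination in Theorem 2: With `Q` symmetric
conditionally negative definite, `K = {x ∈ {0,1}ⁿ : ∑ x i = p}` (`1 ≤ p ≤ n`),
`f x = ½⟨Qx, x⟩`, `h x y = ⟨Qy, x - y⟩ + f y`, `A ⊆ K` nonempty and
`LB = max_{y ∈ A} f y`: if there is no candidate `(x, θ)` with `x ∈ K`,
`θ ≤ h x y` for all `y ∈ A`, and `θ > LB`, then `LB = max_{x ∈ K} f x`. -/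
theorem cutting_plane_termination_optimality
    (n p : ℕ) (hp : 1 ≤ p) (hpn : p ≤ n)
    (Q : Matrix (Fin n) (Fin n) ℝ) (hQ : Q.IsSymm)
    (hcnd : ∀ z : Fin n → ℝ, ∑ i, z i = 0 → Q *ᵥ z ⬝ᵥ z ≤ 0)
    (K : Set (Fin n → ℝ))
    (hK : K = {x | (∀ i, x i = 0 ∨ x i = 1) ∧ ∑ i, x i = (p : ℝ)})
    (f : (Fin n → ℝ) → ℝ) (hf : ∀ x, f x = (1 / 2) * (Q *ᵥ x ⬝ᵥ x))
    (h : (Fin n → ℝ) → (Fin n → ℝ) → ℝ)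
    (hh : ∀ x y, h x y = Q *ᵥ y ⬝ᵥ (x - y) + f y)
    (A : Set (Fin n → ℝ)) (hA : A.Nonempty) (hAK : A ⊆ K)
    (LB : ℝ) (hLB : IsGreatest (f '' A) LB)
    (hterm : ¬ ∃ (x : Fin n → ℝ) (θ : ℝ), x ∈ K ∧ (∀ y ∈ A, θ ≤ h x y) ∧ LB < θ) :
    IsGreatest (f '' K) LB :=
  cutting_plane_termination_optimality_general n p Q hQ hcnd K hK f hf h hh A hAK LB hLB hterm
end

section
/- (Theorem 3, cut-elimination part.) Let Q be a symmetric n×n real matrix, f(x) = ½⟨Qx, x⟩, h(x, y) = ⟨Qy, x − y⟩ + f(y), and K = {x ∈ {0,1}^n : Σ_{i=1}^n x_i = p} with 1 ≤ p ≤ n. Let y ∈ K with Qy ≠ 0, let LB ∈ ℝ with LB ≥ f(y), and let N be an integer with 0 ≤ N ≤ min(p, n − p) such that (LB − f(y)) / ‖Qy‖ > √(2N). Then every x ∈ K with ‖x − y‖² ≤ 2N satisfies h(x, y) ≤ LB; that is, the cutting plane θ ≤ h(·, y) removes all such points as candidates improving on LB. -/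
open Matrix BigOperators

/-- Theorem 3, cut-elimination part: With `f x = ½⟨Qx, x⟩`,
`h x y = ⟨Qy, x - y⟩ + f y`, `y ∈ K` with `Qy ≠ 0`, `LB ≥ f y`, and
`0 ≤ N ≤ min(p, n - p)` with `(LB - f y)/‖Qy‖ > √(2N)`: every `x ∈ K` with
`‖x - y‖² ≤ 2N` satisfies `h x y ≤ LB`, i.e. the cut `θ ≤ h(·, y)` removes all such
points as candidates improving on `LB`. -/
theorem cutting_plane_eliminates_close_points
    (n p : ℕ) (hp : 1 ≤ p) (hpn : p ≤ n)
    (Q : Matrix (Fin n) (Fin n) ℝ) (hQ : Q.IsSymm)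
    (K : Set (Fin n → ℝ))
    (hK : K = {x | (∀ i, x i = 0 ∨ x i = 1) ∧ ∑ i, x i = (p : ℝ)})
    (f : (Fin n → ℝ) → ℝ) (hf : ∀ x, f x = (1 / 2) * (Q *ᵥ x ⬝ᵥ x))
    (h : (Fin n → ℝ) → (Fin n → ℝ) → ℝ)
    (hh : ∀ x y, h x y = Q *ᵥ y ⬝ᵥ (x - y) + f y)
    (y : Fin n → ℝ) (hy : y ∈ K) (hgrad : Q *ᵥ y ≠ 0)
    (LB : ℝ) (hLBf : f y ≤ LB)
    (N : ℕ) (hN : N ≤ min p (n - p))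
    (hgap : (LB - f y) / Real.sqrt (∑ i, ((Q *ᵥ y) i) ^ 2) >
      Real.sqrt (2 * (N : ℝ))) :
    ∀ x ∈ K, ∑ i, (x i - y i) ^ 2 ≤ 2 * (N : ℝ) → h x y ≤ LB := by
  intro x hx hclose
  obtain ⟨i0, hi0⟩ := Function.ne_iff.mp hgrad
  set g := Q *ᵥ y with hgdef
  have hS : 0 < ∑ i, g i ^ 2 :=
    Finset.sum_pos' (fun j _ => sq_nonneg _) ⟨i0, Finset.mem_univ i0, by simpa using sq_pos_of_ne_zero hi0⟩
  have hsqrtS : 0 < Real.sqrt (∑ i, g i ^ 2) := Real.sqrt_pos.mpr hS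
  have hgap' : Real.sqrt (2 * N) * Real.sqrt (∑ i, g i ^ 2) < LB - f y :=
    (lt_div_iff₀ hsqrtS).mp hgap
  have hcs : (∑ i, g i * (x i - y i)) ^ 2 ≤ (∑ i, g i ^ 2) * (∑ i, (x i - y i) ^ 2) :=
    Finset.sum_mul_sq_le_sq_mul_sq _ _ _
  have hdot : ∑ i, g i * (x i - y i) ≤
      Real.sqrt (∑ i, g i ^ 2) * Real.sqrt (∑ i, (x i - y i) ^ 2) := by
    calc ∑ i, g i * (x i - y i) ≤ |∑ i, g i * (x i - y i)| := le_abs_self _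
      _ = Real.sqrt ((∑ i, g i * (x i - y i)) ^ 2) := (Real.sqrt_sq_eq_abs _).symm
      _ ≤ Real.sqrt ((∑ i, g i ^ 2) * (∑ i, (x i - y i) ^ 2)) := Real.sqrt_le_sqrt hcs
      _ = _ := Real.sqrt_mul (by positivity) _
  have hT : Real.sqrt (∑ i, (x i - y i) ^ 2) ≤ Real.sqrt (2 * N) :=
    Real.sqrt_le_sqrt hclose
  have hdot2 : ∑ i, g i * (x i - y i) ≤ Real.sqrt (2 * N) * Real.sqrt (∑ i, g i ^ 2) := by
    calc ∑ i, g i * (x i - y i)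
        ≤ Real.sqrt (∑ i, g i ^ 2) * Real.sqrt (∑ i, (x i - y i) ^ 2) := hdot
      _ ≤ Real.sqrt (∑ i, g i ^ 2) * Real.sqrt (2 * N) :=
          mul_le_mul_of_nonneg_left hT hsqrtS.le
      _ = _ := mul_comm _ _
  have hdp : g ⬝ᵥ (x - y) = ∑ i, g i * (x i - y i) := by
    simp [dotProduct]
  rw [hh]
  rw [hdp] at *
  linarith
end

section
/- (Theorem 3, counting conclusion.) Let Q be a symmetric n×n real matrix, f(x) = ½⟨Qx, x⟩, h(x, y) = ⟨Qy, x − y⟩ + f(y), and K = {x ∈ {0,1}^n : Σ_{i=1}^n x_i = p} with 1 ≤ p ≤ n. Let y ∈ K with Qy ≠ 0, let LB ∈ ℝ with LB ≥ f(y), and let N be an integer with 0 ≤ N ≤ min(p, n − p) such that (LB − f(y)) / ‖Qy‖ > √(2N). Then the number of points x ∈ K satisfying h(x, y) ≤ LB is at least Σ_{q=0}^{N} binom(p, q) · binom(n − p, q). -/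
open Matrix BigOperators Finset

/-!
Points of `K` are indicator vectors `1_T` with `#T = p`; write `y = 1_S`. Removing `q ≤ N`
elements from `S` and adding `q` elements outside `S` gives a point `x ∈ K` with
`‖x - y‖² = 2q ≤ 2N`, so by Cauchy–Schwarz `h x y - f y = ⟪Qy, x - y⟫ ≤ ‖Qy‖ √(2N) < LB - f y`.
These exchanges are injective in the pair of exchanged sets, and there are
`binom(p, q) · binom(n - p, q)` pairs for each `q`.
-/

section IndicatorVec

variable {ι : Type*} [DecidableEq ι]

def indicatorVec (T : Finset ι) : ι → ℝ := fun i => if i ∈ T then 1 else 0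

variable [Fintype ι]

lemma filter_indicatorVec_eq_one (T : Finset ι) : univ.filter (indicatorVec T · = 1) = T := by
  ext i
  by_cases hi : i ∈ T <;> simp [indicatorVec, hi]

lemma indicatorVec_injective : Function.Injective (indicatorVec : Finset ι → ι → ℝ) :=
  fun T T' h => by rw [← filter_indicatorVec_eq_one T, h, filter_indicatorVec_eq_one]

lemma sum_indicatorVec (T : Finset ι) : ∑ i, indicatorVec T i = #T := by
  simp [indicatorVec, sum_ite_mem]

lemma sum_sq_indicatorVec_sub (T S : Finset ι) :
    ∑ i, (indicatorVec T i - indicatorVec S i) ^ 2 = #(symmDiff T S) := by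
  have hcoord : ∀ i,
      (indicatorVec T i - indicatorVec S i) ^ 2 = indicatorVec (symmDiff T S) i := by
    intro i
    by_cases hT : i ∈ T <;> by_cases hS : i ∈ S <;> simp [indicatorVec, mem_symmDiff, hT, hS]
  simp only [hcoord, sum_indicatorVec]

lemma zero_one_vec_eq_indicatorVec {x : ι → ℝ} (hx : ∀ i, x i = 0 ∨ x i = 1) :
    indicatorVec (univ.filter (x · = 1)) = x := by
  funext i
  rcases hx i with h0 | h1 <;> simp [indicatorVec, *]

lemma exists_indicatorVec_iff {x : ι → ℝ} {p : ℕ} :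
    (∃ T : Finset ι, #T = p ∧ indicatorVec T = x) ↔
      (∀ i, x i = 0 ∨ x i = 1) ∧ ∑ i, x i = p := by
  constructor
  · rintro ⟨T, rfl, rfl⟩
    refine ⟨fun i => ?_, sum_indicatorVec T⟩
    by_cases hi : i ∈ T <;> simp [indicatorVec, hi]
  · rintro ⟨hx, hsum⟩
    refine ⟨_, ?_, zero_one_vec_eq_indicatorVec hx⟩
    have hcard := sum_indicatorVec (univ.filter (x · = 1))
    rw [zero_one_vec_eq_indicatorVec hx, hsum] at hcard
    exact_mod_cast hcard.symm

end IndicatorVec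

lemma mul_lt_of_lt_div {a b c : ℝ} (hb : 0 ≤ b) (hc : 0 ≤ c) (h : c < a / b) : b * c < a := by
  obtain rfl | hb := hb.eq_or_lt
  · rw [div_zero] at h
    exact absurd h hc.not_gt
  · rwa [lt_div_iff₀ hb, mul_comm] at h

lemma dotProduct_le_sqrt_mul_sqrt {ι : Type*} [Fintype ι] (v d : ι → ℝ) {r : ℝ}
    (hd : ∑ i, d i ^ 2 ≤ r) : v ⬝ᵥ d ≤ √(∑ i, v i ^ 2) * √r :=
  (Real.sum_mul_le_sqrt_mul_sqrt univ v d).trans <|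
    mul_le_mul_of_nonneg_left (Real.sqrt_le_sqrt hd) (Real.sqrt_nonneg _)

section Exchange

variable {ι : Type*} [DecidableEq ι] {S A B : Finset ι}

lemma sdiff_sdiff_union_of_subset (hA : A ⊆ S) (hB : Disjoint B S) : S \ (S \ A ∪ B) = A := by
  ext i
  have : i ∈ A → i ∈ S := @hA i
  have : i ∈ B → i ∉ S := fun h => disjoint_left.1 hB h
  simp only [mem_sdiff, mem_union]
  tauto

lemma sdiff_union_sdiff_of_disjoint (hB : Disjoint B S) : (S \ A ∪ B) \ S = B := by
  ext i
  have : i ∈ B → i ∉ S := fun h => disjoint_left.1 hB h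
  simp only [mem_sdiff, mem_union]
  tauto

lemma symmDiff_sdiff_union (hA : A ⊆ S) (hB : Disjoint B S) :
    symmDiff (S \ A ∪ B) S = A ∪ B := by
  rw [symmDiff_def, sdiff_union_sdiff_of_disjoint hB, sdiff_sdiff_union_of_subset hA hB,
    sup_eq_union, union_comm]

lemma card_sdiff_union (hA : A ⊆ S) (hB : Disjoint B S) (hAB : #A = #B) :
    #(S \ A ∪ B) = #S := by
  rw [card_union_of_disjoint (hB.symm.mono_left sdiff_subset),
    card_sdiff_of_subset hA, ← hAB, Nat.sub_add_cancel (card_le_card hA)]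

lemma injOn_sdiff_union :
    Set.InjOn (fun AB : Finset ι × Finset ι => S \ AB.1 ∪ AB.2)
      {AB | AB.1 ⊆ S ∧ Disjoint AB.2 S} := by
  rintro ⟨A, B⟩ ⟨hA, hB⟩ ⟨A', B'⟩ ⟨hA', hB'⟩ hT
  simp only at hA hB hA' hB' hT
  rw [Prod.mk.injEq]
  constructor
  · rw [← sdiff_sdiff_union_of_subset hA hB, hT, sdiff_sdiff_union_of_subset hA' hB']
  · rw [← sdiff_union_sdiff_of_disjoint (A := A) hB, hT, sdiff_union_sdiff_of_disjoint hB']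

variable [Fintype ι]

lemma sum_sq_indicatorVec_sdiff_union_sub (hA : A ⊆ S) (hB : Disjoint B S)
    (hAB : #A = #B) : ∑ i, (indicatorVec (S \ A ∪ B) i - indicatorVec S i) ^ 2 = 2 * #A := by
  rw [sum_sq_indicatorVec_sub, symmDiff_sdiff_union hA hB,
    card_union_of_disjoint (hB.symm.mono_left hA), ← hAB]
  push_cast
  ring

def exchangePairs (S : Finset ι) (N : ℕ) : Finset (Finset ι × Finset ι) :=
  (range (N + 1)).biUnion fun q => S.powersetCard q ×ˢ Sᶜ.powersetCard q

lemma mem_exchangePairs {N : ℕ} {AB : Finset ι × Finset ι} :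
    AB ∈ exchangePairs S N ↔ AB.1 ⊆ S ∧ Disjoint AB.2 S ∧ #AB.1 = #AB.2 ∧ #AB.1 ≤ N := by
  simp only [exchangePairs, mem_biUnion, mem_range, mem_product, mem_powersetCard,
    subset_compl_iff_disjoint_right]
  constructor
  · rintro ⟨q, hq, ⟨hA, rfl⟩, hB, hBq⟩
    exact ⟨hA, hB, hBq.symm, Nat.lt_succ_iff.1 hq⟩
  · rintro ⟨hA, hB, hAB, hN⟩
    exact ⟨_, Nat.lt_succ_iff.2 hN, ⟨hA, rfl⟩, hB, hAB.symm⟩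

lemma card_exchangePairs (S : Finset ι) (N : ℕ) :
    #(exchangePairs S N) =
      ∑ q ∈ range (N + 1), (#S).choose q * (Fintype.card ι - #S).choose q := by
  rw [exchangePairs, card_biUnion]
  · simp only [card_product, card_powersetCard, card_compl]
  · intro q _ q' _ hqq'
    refine disjoint_left.2 fun AB hq hq' => hqq' ?_
    rw [mem_product, mem_powersetCard, mem_powersetCard] at hq hq'
    rw [← hq.1.2, hq'.1.2]

lemma injOn_indicatorVec_sdiff_union (S : Finset ι) (N : ℕ) :
    Set.InjOn (fun AB : Finset ι × Finset ι => indicatorVec (S \ AB.1 ∪ AB.2))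
      ↑(exchangePairs S N) :=
  (indicatorVec_injective.comp_injOn injOn_sdiff_union).mono fun _ hAB =>
    (mem_exchangePairs.1 hAB).imp_right And.left

lemma dotProduct_indicatorVec_exchange_le (v : ι → ℝ) {N : ℕ}
    (hAB : (A, B) ∈ exchangePairs S N) :
    v ⬝ᵥ (indicatorVec (S \ A ∪ B) - indicatorVec S) ≤ √(∑ i, v i ^ 2) * √(2 * N) := by
  obtain ⟨hA, hB, hAB, hAN⟩ := mem_exchangePairs.1 hAB
  refine dotProduct_le_sqrt_mul_sqrt v _ ?_
  simp only [Pi.sub_apply, sum_sq_indicatorVec_sdiff_union_sub hA hB hAB]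
  exact_mod_cast Nat.mul_le_mul_left 2 hAN

end Exchange

theorem cutting_plane_elimination_count_general
    (n p : ℕ)
    (Q : Matrix (Fin n) (Fin n) ℝ)
    (K : Set (Fin n → ℝ))
    (hK : K = {x | (∀ i, x i = 0 ∨ x i = 1) ∧ ∑ i, x i = (p : ℝ)})
    (f : (Fin n → ℝ) → ℝ)
    (h : (Fin n → ℝ) → (Fin n → ℝ) → ℝ)
    (hh : ∀ x y, h x y = Q *ᵥ y ⬝ᵥ (x - y) + f y)
    (y : Fin n → ℝ) (hy : y ∈ K)
    (LB : ℝ)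
    (N : ℕ)
    (hgap : (LB - f y) / Real.sqrt (∑ i, ((Q *ᵥ y) i) ^ 2) >
      Real.sqrt (2 * (N : ℝ))) :
    Set.ncard {x | x ∈ K ∧ h x y ≤ LB} ≥
      ∑ q ∈ Finset.range (N + 1), p.choose q * (n - p).choose q := by
  have hmemK : ∀ x, x ∈ K ↔ ∃ T : Finset (Fin n), #T = p ∧ indicatorVec T = x := by
    intro x
    rw [hK]
    exact exists_indicatorVec_iff.symm
  obtain ⟨S, hS, rfl⟩ := (hmemK y).1 hy
  have hslack := mul_lt_of_lt_div (Real.sqrt_nonneg _) (Real.sqrt_nonneg _) hgap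
  have hmaps : ∀ AB ∈ exchangePairs S N, indicatorVec (S \ AB.1 ∪ AB.2) ∈
      {x | x ∈ K ∧ h x (indicatorVec S) ≤ LB} := by
    rintro ⟨A, B⟩ hAB
    obtain ⟨hA, hB, hcard, -⟩ := mem_exchangePairs.1 hAB
    refine ⟨(hmemK _).2 ⟨_, (card_sdiff_union hA hB hcard).trans hS, rfl⟩, ?_⟩
    have hCS := dotProduct_indicatorVec_exchange_le (Q *ᵥ indicatorVec S) hAB
    rw [hh]
    linarith
  have hfin : {x | x ∈ K ∧ h x (indicatorVec S) ≤ LB}.Finite :=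
    (Set.finite_range indicatorVec).subset fun x hx => by
      obtain ⟨T, -, hT⟩ := (hmemK x).1 hx.1
      exact Set.mem_range.2 ⟨T, hT⟩
  calc ∑ q ∈ range (N + 1), p.choose q * (n - p).choose q
      = (↑(exchangePairs S N) : Set (Finset (Fin n) × Finset (Fin n))).ncard := by
        rw [Set.ncard_coe_finset, card_exchangePairs, hS, Fintype.card_fin]
    _ ≤ _ := Set.ncard_le_ncard_of_injOn _ hmaps (injOn_indicatorVec_sdiff_union S N) hfin

/-- Theorem 3, counting conclusion: Under the hypotheses of Theorem 3
(`y ∈ K`, `Qy ≠ 0`, `LB ≥ f y`, `0 ≤ N ≤ min(p, n - p)` and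
`(LB - f y)/‖Qy‖ > √(2N)`), the number of points `x ∈ K` with `h x y ≤ LB` is at least
`∑_{q=0}^{N} binom(p, q) · binom(n - p, q)`. -/
theorem cutting_plane_elimination_count
    (n p : ℕ) (hp : 1 ≤ p) (hpn : p ≤ n)
    (Q : Matrix (Fin n) (Fin n) ℝ) (hQ : Q.IsSymm)
    (K : Set (Fin n → ℝ))
    (hK : K = {x | (∀ i, x i = 0 ∨ x i = 1) ∧ ∑ i, x i = (p : ℝ)})
    (f : (Fin n → ℝ) → ℝ) (hf : ∀ x, f x = (1 / 2) * (Q *ᵥ x ⬝ᵥ x))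
    (h : (Fin n → ℝ) → (Fin n → ℝ) → ℝ)
    (hh : ∀ x y, h x y = Q *ᵥ y ⬝ᵥ (x - y) + f y)
    (y : Fin n → ℝ) (hy : y ∈ K) (hgrad : Q *ᵥ y ≠ 0)
    (LB : ℝ) (hLBf : f y ≤ LB)
    (N : ℕ) (hN : N ≤ min p (n - p))
    (hgap : (LB - f y) / Real.sqrt (∑ i, ((Q *ᵥ y) i) ^ 2) >
      Real.sqrt (2 * (N : ℝ))) :
    Set.ncard {x | x ∈ K ∧ h x y ≤ LB} ≥
      ∑ q ∈ Finset.range (N + 1), p.choose q * (n - p).choose q :=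
  cutting_plane_elimination_count_general n p Q K hK f h hh y hy LB N hgap
end
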